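/- Let d ≥ 1, let Ω ⊆ ℝ^d be a nonempty bounded open set, let ε > 0 and k > 0, and set k′ = ε²k/(k + ε²). Then for all u, w, v ∈ V, (1/k)∫_Ω (u − w)v dx + ∫_Ω ⟨∇u, ∇v⟩ dx + (1/ε²)∫_Ω (u³ − w)v dx = (1/k′)∫_Ω (u − w)v dx + ∫_Ω ⟨∇u, ∇v⟩ dx + (1/ε²)∫_Ω (u³ − u)v dx. Consequently, u satisfies the convex splitting scheme with previous iterate w, time step k, and test functions from any subset of V if and only if u satisfies the fully implicit scheme with previous iterate w and time step k′ for the same test functions. -/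

import Mathlib

/-!
Since `u³ - w = (u³ - u) + (u - w)`, the nonlinear term of the convex splitting scheme contributes
an extra `(1/ε²)(u - w)` to the time-difference term, and `1/k + 1/ε² = 1/k'`.
-/

open MeasureTheory Set RealInnerProductSpace

theorem Continuous.integrableOn_of_isBounded {X E : Type*} [MetricSpace X] [ProperSpace X]
    [MeasurableSpace X] [OpensMeasurableSpace X] [NormedAddCommGroup E]
    {μ : Measure X} [IsFiniteMeasureOnCompacts μ] {f : X → E} {s : Set X}
    (hf : Continuous f) (hs : Bornology.IsBounded s) : IntegrableOn f s μ :=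
  (hf.continuousOn.integrableOn_compact hs.isCompact_closure).mono_set subset_closure

theorem one_div_eq_one_div_add_one_div_of_eq {ε k k' : ℝ} (hε : 0 < ε) (hk : 0 < k)
    (hk' : k' = ε ^ 2 * k / (k + ε ^ 2)) : 1 / k' = 1 / k + 1 / ε ^ 2 := by
  have : k + ε ^ 2 ≠ 0 := by positivity
  rw [hk']
  field_simp
  ring

theorem convexSplitting_residual_eq_fullyImplicit_residual {α : Type*} [MeasurableSpace α]
    {μ : Measure α} {ε k k' : ℝ} (hε : 0 < ε) (hk : 0 < k)
    (hk' : k' = ε ^ 2 * k / (k + ε ^ 2)) {u w v : α → ℝ}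
    (hdiff : Integrable (fun x => (u x - w x) * v x) μ)
    (hf : Integrable (fun x => (u x ^ 3 - u x) * v x) μ) (G : ℝ) :
    1 / k * (∫ x, (u x - w x) * v x ∂μ) + G + 1 / ε ^ 2 * (∫ x, (u x ^ 3 - w x) * v x ∂μ)
      = 1 / k' * (∫ x, (u x - w x) * v x ∂μ) + G
        + 1 / ε ^ 2 * (∫ x, (u x ^ 3 - u x) * v x ∂μ) := by
  have hsplit : ∫ x, (u x ^ 3 - w x) * v x ∂μ
      = (∫ x, (u x ^ 3 - u x) * v x ∂μ) + ∫ x, (u x - w x) * v x ∂μ := by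
    rw [← integral_add hf hdiff]
    congr with x
    ring
  rw [hsplit, one_div_eq_one_div_add_one_div_of_eq hε hk hk']
  ring

theorem stmt_4_general (d : ℕ)
    (Ω : Set (EuclideanSpace ℝ (Fin d)))
    (hΩbd : Bornology.IsBounded Ω)
    (ε k k' : ℝ) (hε : 0 < ε) (hk0 : 0 < k)
    (hk' : k' = ε ^ 2 * k / (k + ε ^ 2))
    (u w : EuclideanSpace ℝ (Fin d) → ℝ)
    (hu : ContDiff ℝ 1 u) (hw : ContDiff ℝ 1 w) :
    (∀ v : EuclideanSpace ℝ (Fin d) → ℝ, ContDiff ℝ 1 v →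
      1 / k * (∫ x in Ω, (u x - w x) * v x)
        + (∫ x in Ω, ⟪gradient u x, gradient v x⟫)
        + 1 / ε ^ 2 * (∫ x in Ω, ((u x) ^ 3 - w x) * v x)
      = 1 / k' * (∫ x in Ω, (u x - w x) * v x)
        + (∫ x in Ω, ⟪gradient u x, gradient v x⟫)
        + 1 / ε ^ 2 * (∫ x in Ω, ((u x) ^ 3 - u x) * v x)) ∧
    (∀ T : Set (EuclideanSpace ℝ (Fin d) → ℝ), (∀ v ∈ T, ContDiff ℝ 1 v) →
      ((∀ v ∈ T,
        1 / k * (∫ x in Ω, (u x - w x) * v x)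
          + (∫ x in Ω, ⟪gradient u x, gradient v x⟫)
          + 1 / ε ^ 2 * (∫ x in Ω, ((u x) ^ 3 - w x) * v x) = 0) ↔
       (∀ v ∈ T,
        1 / k' * (∫ x in Ω, (u x - w x) * v x)
          + (∫ x in Ω, ⟪gradient u x, gradient v x⟫)
          + 1 / ε ^ 2 * (∫ x in Ω, ((u x) ^ 3 - u x) * v x) = 0))) := by
  have residual_eq : ∀ v : EuclideanSpace ℝ (Fin d) → ℝ, ContDiff ℝ 1 v →
      1 / k * (∫ x in Ω, (u x - w x) * v x)
        + (∫ x in Ω, ⟪gradient u x, gradient v x⟫)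
        + 1 / ε ^ 2 * (∫ x in Ω, ((u x) ^ 3 - w x) * v x)
      = 1 / k' * (∫ x in Ω, (u x - w x) * v x)
        + (∫ x in Ω, ⟪gradient u x, gradient v x⟫)
        + 1 / ε ^ 2 * (∫ x in Ω, ((u x) ^ 3 - u x) * v x) := fun v hv =>
    convexSplitting_residual_eq_fullyImplicit_residual hε hk0 hk'
      (((hu.continuous.sub hw.continuous).mul hv.continuous).integrableOn_of_isBounded hΩbd)
      ((((hu.continuous.pow 3).sub hu.continuous).mul hv.continuous).integrableOn_of_isBounded
        hΩbd) _
  exact ⟨residual_eq, fun T hT => forall₂_congr fun v hv => by rw [residual_eq v (hT v hv)]⟩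

/-- The convex splitting scheme for the Allen–Cahn equation is exactly the fully
implicit scheme with the smaller time step `k' = ε²k/(k+ε²)` (Theorem 2.4). -/
theorem stmt_4 (d : ℕ) (hd : 1 ≤ d)
    (Ω : Set (EuclideanSpace ℝ (Fin d))) (hΩne : Ω.Nonempty)
    (hΩbd : Bornology.IsBounded Ω) (hΩop : IsOpen Ω)
    (ε k k' : ℝ) (hε : 0 < ε) (hk0 : 0 < k)
    (hk' : k' = ε ^ 2 * k / (k + ε ^ 2))
    (u w : EuclideanSpace ℝ (Fin d) → ℝ)
    (hu : ContDiff ℝ 1 u) (hw : ContDiff ℝ 1 w) :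
    (∀ v : EuclideanSpace ℝ (Fin d) → ℝ, ContDiff ℝ 1 v →
      1 / k * (∫ x in Ω, (u x - w x) * v x)
        + (∫ x in Ω, ⟪gradient u x, gradient v x⟫)
        + 1 / ε ^ 2 * (∫ x in Ω, ((u x) ^ 3 - w x) * v x)
      = 1 / k' * (∫ x in Ω, (u x - w x) * v x)
        + (∫ x in Ω, ⟪gradient u x, gradient v x⟫)
        + 1 / ε ^ 2 * (∫ x in Ω, ((u x) ^ 3 - u x) * v x)) ∧
    (∀ T : Set (EuclideanSpace ℝ (Fin d) → ℝ), (∀ v ∈ T, ContDiff ℝ 1 v) →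
      ((∀ v ∈ T,
        1 / k * (∫ x in Ω, (u x - w x) * v x)
          + (∫ x in Ω, ⟪gradient u x, gradient v x⟫)
          + 1 / ε ^ 2 * (∫ x in Ω, ((u x) ^ 3 - w x) * v x) = 0) ↔
       (∀ v ∈ T,
        1 / k' * (∫ x in Ω, (u x - w x) * v x)
          + (∫ x in Ω, ⟪gradient u x, gradient v x⟫)
          + 1 / ε ^ 2 * (∫ x in Ω, ((u x) ^ 3 - u x) * v x) = 0))) :=
  stmt_4_general d Ω hΩbd ε k k' hε hk0 hk' u w hu hw
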